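/- arXiv:0712.0665 — 2 statements merged into one kernel-verified Lean document; each statement's English description precedes it below -/
import Mathlib

section
/- Let A be a Noetherian ring, M a finitely generated A-module, 𝔭 a minimal prime of Supp(M), and set t = length_{A_𝔭}(M_𝔭). Then there exists a chain of submodules 0 = N_0 ⊂ N_1 ⊂ ⋯ ⊂ N_t ⊆ M such that N_{k}/N_{k-1} ≅ A/𝔭 for 1 ≤ k ≤ t and 𝔭 ∉ Ass_A(M/N_t). -/
/-!
Induction on `t`. If `M_𝔭 = 0` then `𝔭` is not in the support of `M`, hence not associated to it.
Otherwise `𝔭` is minimal in `Supp M`, so it is an associated prime: some `y ∈ M` has annihilator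
`𝔭`, i.e. `A ∙ y ≅ A/𝔭`. After localizing, `(A ∙ y)_𝔭` is the residue field of `A_𝔭`, a simple
module, so `(M / A ∙ y)_𝔭` has length `t - 1`; the chain for `M / A ∙ y` pulls back to `M` and
is prefixed by `0 ⊂ A ∙ y`.
-/

open Submodule

section Chain

variable {R M X : Type*} [Ring R] [AddCommGroup M] [Module R M] [AddCommGroup X] [Module R X]

def Submodule.IsChainWithFactor (X : Type*) [AddCommGroup X] [Module R X] {t : ℕ}
    (N : Fin (t + 1) → Submodule R M) : Prop :=
  N 0 = ⊥ ∧ StrictMono N ∧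
    ∀ k : Fin t, Nonempty ((N k.succ ⧸ (N k.castSucc).comap (N k.succ).subtype) ≃ₗ[R] X)

lemma Submodule.isChainWithFactor_bot :
    IsChainWithFactor X (fun _ : Fin (0 + 1) => (⊥ : Submodule R M)) :=
  ⟨rfl, Subsingleton.strictMono (α := Fin 1) _, fun k => k.elim0⟩

noncomputable def Submodule.comapSubquotientEquiv {M' : Type*} [AddCommGroup M'] [Module R M']
    {π : M →ₗ[R] M'} (hπ : Function.Surjective π) (Q₁ Q₂ : Submodule R M') :
    (Q₂.comap π ⧸ (Q₁.comap π).comap (Q₂.comap π).subtype) ≃ₗ[R] Q₂ ⧸ Q₁.comap Q₂.subtype :=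
  let φ : Q₂.comap π →ₗ[R] Q₂ ⧸ Q₁.comap Q₂.subtype :=
    (Q₁.comap Q₂.subtype).mkQ ∘ₗ π.restrict fun _ hx => hx
  have hφ : Function.Surjective φ := by
    refine (mkQ_surjective _).comp ?_
    rintro ⟨y, hy⟩
    obtain ⟨x, rfl⟩ := hπ y
    exact ⟨⟨x, hy⟩, rfl⟩
  have hker : LinearMap.ker φ = (Q₁.comap π).comap (Q₂.comap π).subtype := by
    ext x
    simp [φ]
  (quotEquivOfEq _ _ hker.symm).trans (φ.quotKerEquivOfSurjective hφ)

lemma Submodule.IsChainWithFactor.cons [Nontrivial X] {P : Submodule R M} (e : P ≃ₗ[R] X)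
    {t : ℕ} {N : Fin (t + 1) → Submodule R (M ⧸ P)} (hN : IsChainWithFactor X N) :
    IsChainWithFactor X (Fin.cons ⊥ fun i => (N i).comap P.mkQ : Fin (t + 2) → Submodule R M) := by
  obtain ⟨hN0, hmono, hfactor⟩ := hN
  have hP : ⊥ < P := by
    rw [bot_lt_iff_ne_bot, ne_eq, ← subsingleton_iff_eq_bot]
    exact fun h => not_subsingleton X e.symm.toEquiv.subsingleton
  refine ⟨rfl, Fin.strictMono_iff_lt_succ.mpr fun i => ?_, fun k => ?_⟩
  · induction i using Fin.cases with
    | zero => simpa [hN0] using hP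
    | succ j =>
      simpa using comap_strictMono_of_surjective P.mkQ_surjective (hmono Fin.castSucc_lt_succ)
  · induction k using Fin.cases with
    | zero =>
      rw [Fin.castSucc_zero, Fin.cons_succ, Fin.cons_zero, hN0, comap_bot, ker_mkQ,
        comap_bot, ker_subtype]
      exact ⟨(quotEquivOfEqBot ⊥ rfl).trans e⟩
    | succ j =>
      rw [← Fin.succ_castSucc, Fin.cons_succ, Fin.cons_succ]
      obtain ⟨e'⟩ := hfactor j
      exact ⟨(comapSubquotientEquiv P.mkQ_surjective _ _).trans e'⟩

noncomputable def Submodule.quotientComapMkQEquiv (P : Submodule R M) (Q : Submodule R (M ⧸ P)) :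
    (M ⧸ Q.comap P.mkQ) ≃ₗ[R] (M ⧸ P) ⧸ Q :=
  (quotientQuotientEquivQuotient P _ (le_comap_mkQ P Q)).symm.trans
    (quotEquivOfEq _ _ (map_comap_eq_of_surjective P.mkQ_surjective Q))

end Chain

section Localization

variable {A M : Type*} [CommRing A] [AddCommGroup M] [Module A M] {𝔭 : Ideal A}

lemma IsAssociatedPrime.mem_support [IsNoetherianRing A] (h : IsAssociatedPrime 𝔭 M) :
    ⟨𝔭, h.isPrime⟩ ∈ Module.support A M := by
  obtain ⟨-, f, hf⟩ := (isAssociatedPrime_iff_exists_injective_linearMap 𝔭 M).mp h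
  refine Module.support_subset_of_injective f hf ?_
  rw [Module.support_of_algebra]
  simp

variable [𝔭.IsPrime]

lemma exists_torsionOf_eq_of_nontrivial_localizedModule [IsNoetherianRing A] [Module.Finite A M]
    (hmin : ∀ q : Ideal A, q.IsPrime → Module.annihilator A M ≤ q → q ≤ 𝔭 → q = 𝔭)
    [Nontrivial (LocalizedModule 𝔭.primeCompl M)] :
    ∃ y : M, Ideal.torsionOf A M y = 𝔭 := by
  have hsupp : (⟨𝔭, ‹_›⟩ : PrimeSpectrum A) ∈ Module.support A M :=
    Module.mem_support_iff.mpr ‹_›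
  have hminimal : 𝔭 ∈ (Module.annihilator A M).minimalPrimes :=
    ⟨⟨‹_›, Module.annihilator_le_of_mem_support hsupp⟩,
      fun q hq hq𝔭 => (hmin q hq.1 hq.2 hq𝔭).ge⟩
  obtain ⟨-, y, hy⟩ := isAssociatedPrime_iff.mp
    (Module.associatedPrimes.minimalPrimes_annihilator_subset_associatedPrimes A M hminimal)
  refine ⟨y, hy ▸ ?_⟩
  ext a
  simp [Ideal.mem_torsionOf_iff, mem_colon_singleton]

lemma isSimpleModule_span_mk_of_torsionOf_eq {y : M} (hy : Ideal.torsionOf A M y = 𝔭) :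
    IsSimpleModule (Localization.AtPrime 𝔭)
      (span (Localization.AtPrime 𝔭) {LocalizedModule.mk y (1 : 𝔭.primeCompl)}) := by
  set z : LocalizedModule 𝔭.primeCompl M := LocalizedModule.mk y 1
  have hz : z ≠ 0 := by
    intro hz
    obtain ⟨s, hs⟩ := (IsLocalizedModule.eq_zero_iff 𝔭.primeCompl
      (LocalizedModule.mkLinearMap 𝔭.primeCompl M)).mp hz
    have hs𝔭 := (Ideal.mem_torsionOf_iff y _).mpr hs
    rw [hy] at hs𝔭
    exact s.2 hs𝔭
  have htorsion : Ideal.torsionOf (Localization.AtPrime 𝔭) _ z =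
      𝔭.map (algebraMap A (Localization.AtPrime 𝔭)) := by
    refine le_antisymm ?_ ?_
    · rw [Localization.AtPrime.map_eq_maximalIdeal]
      exact IsLocalRing.le_maximalIdeal (by rwa [ne_eq, Ideal.torsionOf_eq_top_iff])
    · rw [Ideal.map_le_iff_le_comap]
      intro a ha
      rw [← hy, Ideal.mem_torsionOf_iff] at ha
      rw [Ideal.mem_comap, Ideal.mem_torsionOf_iff, algebraMap_smul, LocalizedModule.smul'_mk, ha,
        LocalizedModule.zero_mk]
  exact isSimpleModule_iff_quot_maximal.mpr ⟨_, inferInstance,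
    ⟨(Ideal.quotTorsionOfEquivSpanSingleton _ _ z).symm.trans (quotEquivOfEq _ _ htorsion)⟩⟩

lemma length_localizedModule_quotient_span_add_one {y : M} (hy : Ideal.torsionOf A M y = 𝔭) :
    Module.length (Localization.AtPrime 𝔭) (LocalizedModule 𝔭.primeCompl (M ⧸ A ∙ y)) + 1 =
      Module.length (Localization.AtPrime 𝔭) (LocalizedModule 𝔭.primeCompl M) := by
  have hspan : (A ∙ y).localized 𝔭.primeCompl =
      span (Localization.AtPrime 𝔭) {LocalizedModule.mk y (1 : 𝔭.primeCompl)} := by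
    rw [localized, localized'_span, Set.image_singleton]
    rfl
  have hsimple := isSimpleModule_span_mk_of_torsionOf_eq hy
  rw [← hspan] at hsimple
  set N := (A ∙ y).localized 𝔭.primeCompl
  rw [← (localizedQuotientEquiv 𝔭.primeCompl (A ∙ y)).length_eq,
    Module.length_eq_add_of_exact N.subtype N.mkQ N.injective_subtype N.mkQ_surjective
      (LinearMap.exact_subtype_mkQ N), Module.length_eq_one _ N, add_comm]

/-- Minimality of `𝔭` is phrased so that it passes to quotients of `M`, whose localization at
`𝔭` may vanish. -/
theorem exists_isChainWithFactor_of_length_localizedModule [IsNoetherianRing A]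
    [Module.Finite A M]
    (hmin : ∀ q : Ideal A, q.IsPrime → Module.annihilator A M ≤ q → q ≤ 𝔭 → q = 𝔭) {t : ℕ}
    (hlen : Module.length (Localization.AtPrime 𝔭) (LocalizedModule 𝔭.primeCompl M) = t) :
    ∃ N : Fin (t + 1) → Submodule A M,
      IsChainWithFactor (A ⧸ 𝔭) N ∧ 𝔭 ∉ associatedPrimes A (M ⧸ N (Fin.last t)) := by
  induction t generalizing M with
  | zero =>
    have : Subsingleton (LocalizedModule 𝔭.primeCompl M) :=
      Module.length_eq_zero_iff.mp (by exact_mod_cast hlen)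
    refine ⟨_, isChainWithFactor_bot, fun hass => ?_⟩
    rw [LinearEquiv.AssociatedPrimes.eq (quotEquivOfEqBot ⊥ rfl)] at hass
    exact not_nontrivial _ (Module.mem_support_iff.mp hass.mem_support)
  | succ n ih =>
    have : Nontrivial (LocalizedModule 𝔭.primeCompl M) :=
      Module.length_pos_iff.mp (by rw [hlen]; exact_mod_cast n.succ_pos)
    obtain ⟨y, hy⟩ := exists_torsionOf_eq_of_nontrivial_localizedModule hmin
    have hlen' := length_localizedModule_quotient_span_add_one hy
    rw [hlen, Nat.cast_succ] at hlen'
    have hann : Module.annihilator A M ≤ Module.annihilator A (M ⧸ A ∙ y) :=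
      LinearMap.annihilator_le_of_surjective _ (mkQ_surjective _)
    obtain ⟨N, hN, hass⟩ := ih (fun q hq hle => hmin q hq (hann.trans hle))
      (WithTop.add_right_cancel ENat.one_ne_top hlen')
    refine ⟨_, hN.cons ((Ideal.quotTorsionOfEquivSpanSingleton A M y).symm.trans
      (quotEquivOfEq _ _ hy)), ?_⟩
    rwa [← Fin.succ_last, Fin.cons_succ,
      LinearEquiv.AssociatedPrimes.eq (quotientComapMkQEquiv _ _)]

end Localization

/-- For a minimal prime `𝔭` of the support of a finitely generated module `M` over a Noetherian
ring, if `t` is the length of `M_𝔭` over `A_𝔭` (witnessed by a composition series), then there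
is a chain `0 = N 0 ⊂ N 1 ⊂ ⋯ ⊂ N t ⊆ M` with all successive quotients isomorphic to `A/𝔭`
and `𝔭 ∉ Ass(M / N t)`. -/
theorem stmt9 (A : Type) [CommRing A] [IsNoetherianRing A]
    (M : Type) [AddCommGroup M] [Module A M] [Module.Finite A M]
    (𝔭 : Ideal A) [h𝔭 : 𝔭.IsPrime]
    (hmin : 𝔭 ∈ (Module.annihilator A M).minimalPrimes
)
    (t : ℕ)
    (s : CompositionSeries (Submodule (Localization.AtPrime 𝔭) (LocalizedModule 𝔭.primeCompl M)))
    (hhead : s.head = ⊥) (hlast : s.last = ⊤) (hlen : s.length = t) :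
    ∃ N : Fin (t + 1) → Submodule A M,
      N 0 = ⊥ ∧ StrictMono N ∧
      (∀ k : Fin t, Nonempty
        ((↥(N k.succ) ⧸ Submodule.comap (N k.succ).subtype (N k.castSucc)) ≃ₗ[A] A ⧸ 𝔭)) ∧
      𝔭 ∉ associatedPrimes A (M ⧸ N (Fin.last t)) := by
  have hlength := hlen ▸ Module.length_compositionSeries s hhead hlast
  obtain ⟨N, ⟨hN0, hmono, hfactor⟩, hass⟩ := exists_isChainWithFactor_of_length_localizedModule
    (fun q hq hle hq𝔭 => le_antisymm hq𝔭 (hmin.2 ⟨hq, hle⟩ hq𝔭)) hlength.symm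
  exact ⟨N, hN0, hmono, hfactor, hass⟩
end

section
/- Let (A, 𝔪) be a Noetherian local ring, 𝔭 a prime ideal, M a finitely generated A-module, and suppose there is an injection A/𝔭 ↪ M with cokernel Q, where some y ∈ A \ 𝔭 annihilates Q. If x ∈ A annihilates H^i_𝔪(M) for all i < h, then (xy)^2 annihilates H^i_𝔪(A/𝔭) for all i < h. -/
/-!
Since `f` is injective and `y` kills its cokernel, `y • m` has a unique `f`-preimage for every
`m : M`; this gives `g : M → A ⧸ 𝔭` with `g ∘ f = y • id`. Local cohomology is an `A`-linear
functor, so multiplication by `y` on `H^i_𝔪(A ⧸ 𝔭)` factors through `H^i_𝔪(M)`, which `x` kills.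
Hence already `x * y`, and a fortiori `(x * y) ^ 2`, annihilates `H^i_𝔪(A ⧸ 𝔭)`.
-/

open CategoryTheory Limits

section Homology

variable {R : Type*} [Semiring R] (C : Type*) [Category C] [Preadditive C] [Linear R C]
  [CategoryWithHomology C] {ι : Type*} (c : ComplexShape ι) (i : ι)

instance HomologicalComplex.homologyFunctor_linear :
    (HomologicalComplex.homologyFunctor C c i).Linear R where
  map_smul f r :=
    ShortComplex.homologyMap_smul ((HomologicalComplex.shortComplexFunctor C c i).map f) r

instance HomotopyCategory.homologyFunctor_linear :
    (HomotopyCategory.homologyFunctor C c i).Linear R :=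
  have := Functor.linear_of_iso R (HomotopyCategory.homologyFunctorFactors C c i).symm
  Functor.linear_of_full_essSurj_comp (HomotopyCategory.quotient C c) _

end Homology

namespace CategoryTheory

/- `Ext` left-derives functors with values in `(ModuleCat R)ᵒᵖ`, so its linearity goes
through this instance. -/
instance Linear.opposite {R : Type*} [Semiring R] (C : Type*) [Category C] [Preadditive C]
    [Linear R C] : Linear R Cᵒᵖ where
  homModule _ _ :=
    { smul := fun r f => (r • f.unop).op
      one_smul := fun _ => Quiver.Hom.unop_inj (one_smul _ _)
      mul_smul := fun r s f => Quiver.Hom.unop_inj (mul_smul r s f.unop)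
      smul_zero := fun r => Quiver.Hom.unop_inj (smul_zero r)
      smul_add := fun r f g => Quiver.Hom.unop_inj (smul_add r f.unop g.unop)
      add_smul := fun r s f => Quiver.Hom.unop_inj (add_smul r s f.unop)
      zero_smul := fun f => Quiver.Hom.unop_inj (zero_smul R f.unop) }
  smul_comp _ _ _ r f g := Quiver.Hom.unop_inj (Linear.comp_smul _ _ _ g.unop r f.unop)
  comp_smul _ _ _ f r g := Quiver.Hom.unop_inj (Linear.smul_comp _ _ _ r g.unop f.unop)

namespace NatTrans

section Preadditive

variable {R : Type*} [Semiring R] {C D : Type*} [Category C] [Preadditive C]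
  [Category D] [Preadditive D] [Linear R D] {F G : C ⥤ D} [F.Additive] [G.Additive]
  (α : F ⟶ G) (r : R) {ι : Type*} (c : ComplexShape ι)

lemma mapHomologicalComplex_smul :
    mapHomologicalComplex (r • α) c = r • mapHomologicalComplex α c := by
  ext
  rfl

lemma mapHomotopyCategory_smul :
    mapHomotopyCategory (r • α) c = r • mapHomotopyCategory α c := by
  ext K
  change (HomotopyCategory.quotient D c).map ((mapHomologicalComplex (r • α) c).app K.as) = _
  rw [mapHomologicalComplex_smul]
  exact (HomotopyCategory.quotient D c).map_smul r _

end Preadditive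

lemma rightOp_smul {R : Type*} [Semiring R] {C D : Type*} [Category C] [Category D]
    [Preadditive D] [Linear R D] {F G : Cᵒᵖ ⥤ D} (α : F ⟶ G) (r : R) :
    NatTrans.rightOp (r • α) = r • NatTrans.rightOp α :=
  rfl

variable {R : Type*} [Semiring R] {C D : Type*} [Category C] [Abelian C]
  [HasProjectiveResolutions C] [Category D] [Abelian D] [Linear R D]
  {F G : C ⥤ D} [F.Additive] [G.Additive]

lemma leftDerived_smul (α : F ⟶ G) (r : R) (n : ℕ) :
    leftDerived (r • α) n = r • leftDerived α n := by
  ext X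
  simp only [leftDerived, leftDerivedToHomotopyCategory, mapHomotopyCategory_smul]
  exact (HomotopyCategory.homologyFunctor D _ n).map_smul r
    ((mapHomotopyCategory α _).app ((projectiveResolutions C).obj X))

end NatTrans

instance linearYoneda_linear (R : Type*) [CommRing R] (C : Type*) [Category C] [Preadditive C]
    [Linear R C] : (linearYoneda R C).Linear R where
  map_smul φ r := by
    ext Z g
    exact Linear.comp_smul _ _ _ g r φ

section Colimit

variable (R : Type*) [Semiring R] {J C D : Type*} [Category J] [Category C] [Preadditive C]
  [CategoryTheory.Linear R C] [Category D] [Preadditive D] [CategoryTheory.Linear R D]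
  [HasColimitsOfShape J D]

lemma Functor.linear_colimit (F : J ⥤ C ⥤ D) [∀ j, (F.obj j).Linear R] :
    (colimit F).Linear R where
  map_smul φ r := by
    refine colimit_obj_ext fun j => ?_
    rw [Linear.comp_smul, ← NatTrans.naturality, ← NatTrans.naturality, Functor.map_smul,
      Linear.smul_comp]

end Colimit

section Annihilator

variable {R C : Type*} [CommRing R] [Category C] [Preadditive C] [CategoryTheory.Linear R C]

lemma Functor.mul_mem_annihilator_of_comp_eq_smul_id (F : C ⥤ ModuleCat R) [F.Linear R]
    {N M : C} {f : N ⟶ M} {g : M ⟶ N} {y : R} (hfg : f ≫ g = y • 𝟙 N) {x : R}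
    (hx : x ∈ Module.annihilator R (F.obj M)) : x * y ∈ Module.annihilator R (F.obj N) := by
  rw [Module.mem_annihilator] at hx ⊢
  intro t
  have hy : y • t = F.map g (F.map f t) := by
    rw [← ModuleCat.comp_apply, ← F.map_comp, hfg, F.map_smul, F.map_id]
    rfl
  rw [mul_smul, hy, ← (F.map g).hom.map_smul, hx, map_zero]

end Annihilator

end CategoryTheory

instance Ext_obj_linear (R : Type*) [CommRing R] (C : Type*) [Category C] [Abelian C]
    [Linear R C] [EnoughProjectives C] (n : ℕ) (X : Cᵒᵖ) : ((Ext R C n).obj X).Linear R where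
  map_smul φ r := by
    change ((NatTrans.leftDerived ((linearYoneda R C).map (r • φ)).rightOp n).app X.unop).unop =
      r • ((NatTrans.leftDerived ((linearYoneda R C).map φ).rightOp n).app X.unop).unop
    rw [Functor.map_smul, NatTrans.rightOp_smul, NatTrans.leftDerived_smul]
    rfl

instance localCohomology_linear {R : Type*} [CommRing R] (J : Ideal R) (i : ℕ) :
    (localCohomology J i).Linear R :=
  have (j : ℕᵒᵖᵒᵖ) :
      ((localCohomology.diagram (localCohomology.idealPowersDiagram J) i).obj j).Linear R :=
    Ext_obj_linear R (ModuleCat R) i _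
  Functor.linear_colimit R (localCohomology.diagram (localCohomology.idealPowersDiagram J) i)

theorem LinearMap.exists_comp_eq_smul_id {R N M : Type*} [CommRing R] [AddCommGroup N]
    [Module R N] [AddCommGroup M] [Module R M] {f : N →ₗ[R] M} (hf : Function.Injective f)
    {y : R} (hy : ∀ q : M ⧸ LinearMap.range f, y • q = 0) :
    ∃ g : M →ₗ[R] N, g ∘ₗ f = y • LinearMap.id := by
  have hy' (m : M) : y • m ∈ LinearMap.range f := by
    simpa [← Submodule.Quotient.mk_smul, Submodule.Quotient.mk_eq_zero] using
      hy (Submodule.Quotient.mk m)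
  let e := LinearEquiv.ofInjective f hf
  refine ⟨e.symm ∘ₗ (y • LinearMap.id).codRestrict _ hy', LinearMap.ext fun a => ?_⟩
  apply e.injective
  ext
  simp [e]

theorem stmt10_general (A : Type) [CommRing A] [IsLocalRing A]
    (M : Type) [AddCommGroup M] [Module A M]
    (𝔭 : Ideal A)
    (f : (A ⧸ 𝔭) →ₗ[A] M) (hf : Function.Injective f)
    (y : A)
    (hyQ : ∀ q : M ⧸ LinearMap.range f, y • q = 0)
    (h : ℕ) (x : A)
    (hx : ∀ i < h, x ∈ Module.annihilator A
      ((localCohomology (IsLocalRing.maximalIdeal A) i).obj (ModuleCat.of A M))) :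
    ∀ i < h, (x * y) ^ 2 ∈ Module.annihilator A
      ((localCohomology (IsLocalRing.maximalIdeal A) i).obj (ModuleCat.of A (A ⧸ 𝔭))) := by
  obtain ⟨g, hgf⟩ := LinearMap.exists_comp_eq_smul_id hf hyQ
  intro i hi
  have hxy : x * y ∈ Module.annihilator A _ :=
    (localCohomology (IsLocalRing.maximalIdeal A) i).mul_mem_annihilator_of_comp_eq_smul_id
      (f := ModuleCat.ofHom f) (g := ModuleCat.ofHom g) (ModuleCat.hom_ext hgf) (hx i hi)
  exact Ideal.pow_mem_of_mem _ hxy 2 two_pos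

/-- If `0 → A/𝔭 → M → Q → 0` is exact with `y ∉ 𝔭` annihilating `Q`, and `x` annihilates
`H^i_𝔪(M)` for all `i < h`, then `(xy)^2` annihilates `H^i_𝔪(A/𝔭)` for all `i < h`. -/
theorem stmt10 (A : Type) [CommRing A] [IsNoetherianRing A] [IsLocalRing A]
    (M : Type) [AddCommGroup M] [Module A M] [Module.Finite A M]
    (𝔭 : Ideal A) (h𝔭 : 𝔭.IsPrime)
    (f : (A ⧸ 𝔭) →ₗ[A] M) (hf : Function.Injective f)
    (y : A) (hy : y ∉ 𝔭)
    (hyQ : ∀ q : M ⧸ LinearMap.range f, y • q = 0)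
    (h : ℕ) (x : A)
    (hx : ∀ i < h, x ∈ Module.annihilator A
      ((localCohomology (IsLocalRing.maximalIdeal A) i).obj (ModuleCat.of A M))) :
    ∀ i < h, (x * y) ^ 2 ∈ Module.annihilator A
      ((localCohomology (IsLocalRing.maximalIdeal A) i).obj (ModuleCat.of A (A ⧸ 𝔭))) :=
  stmt10_general A M 𝔭 f hf y hyQ h x hx
end
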